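/- Suppose R > 0 and β ∈ ℂ. Let ψ : ℝ² → ℂ be a smooth function, not identically zero on Ω, with ψ = 0 and ∇ψ = 0 on ∂Ω, satisfying (1/R)·Δ²ψ = β·Δψ on Ω. Then β is real and β < 0. -/

import Mathlib

open MeasureTheory Complex

noncomputable section

/-- Partial derivative with respect to the first (x) variable. -/
def pdx (f : ℝ × ℝ → ℂ) : ℝ × ℝ → ℂ := fun p => deriv (fun x => f (x, p.2)) p.1

/-- Partial derivative with respect to the second (y) variable. -/
def pdy (f : ℝ × ℝ → ℂ) : ℝ × ℝ → ℂ := fun p => deriv (fun y => f (p.1, y)) p.2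

/-- The Laplacian Δf = f_xx + f_yy. -/
def lap (f : ℝ × ℝ → ℂ) : ℝ × ℝ → ℂ := fun p => pdx (pdx f) p + pdy (pdy f) p

/-- The open unit disk Ω. -/
def disk : Set (ℝ × ℝ) := {p | p.1 ^ 2 + p.2 ^ 2 < 1}

/-- The unit circle ∂Ω. -/
def bdry : Set (ℝ × ℝ) := {p | p.1 ^ 2 + p.2 ^ 2 = 1}

/-! Multiplying the equation by `conj ψ` and integrating over the disk, Green's first identity
(whose boundary terms vanish because `ψ` and `∇ψ` vanish on the circle) turns it into
`(1/R) ‖Δψ‖² = -β ‖∇ψ‖²`, the left side after integrating by parts twice. As `ψ` vanishes on the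
circle but not on the disk, `∇ψ ≢ 0`, and then also `Δψ ≢ 0` since `∫ Δψ · conj ψ = -‖∇ψ‖²`.
Hence `β = -‖Δψ‖² / (R ‖∇ψ‖²) < 0`. The divergence theorem on the disk needed for Green's identity
is obtained slice by slice, from Fubini and the fundamental theorem of calculus. -/

open scoped ContDiff ComplexConjugate
open Set Topology

section PartialDerivatives

variable {f u v : ℝ × ℝ → ℂ} {p : ℝ × ℝ}

theorem hasDerivAt_pdx (hf : DifferentiableAt ℝ f p) :
    HasDerivAt (fun x => f (x, p.2)) (pdx f p) p.1 :=
  (hf.comp p.1 (by fun_prop)).hasDerivAt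

theorem hasDerivAt_pdy (hf : DifferentiableAt ℝ f p) :
    HasDerivAt (fun y => f (p.1, y)) (pdy f p) p.2 :=
  (hf.comp p.2 (by fun_prop)).hasDerivAt

theorem pdx_eq_fderiv (hf : DifferentiableAt ℝ f p) : pdx f p = fderiv ℝ f p (1, 0) :=
  (hf.hasFDerivAt.comp_hasDerivAt p.1 ((hasDerivAt_id p.1).prodMk (hasDerivAt_const _ _))).deriv

theorem pdy_eq_fderiv (hf : DifferentiableAt ℝ f p) : pdy f p = fderiv ℝ f p (0, 1) :=
  (hf.hasFDerivAt.comp_hasDerivAt p.2 ((hasDerivAt_const _ _).prodMk (hasDerivAt_id p.2))).deriv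

theorem pdx_mul (hu : DifferentiableAt ℝ u p) (hv : DifferentiableAt ℝ v p) :
    pdx (fun q => u q * v q) p = pdx u p * v p + u p * pdx v p :=
  ((hasDerivAt_pdx hu).mul (hasDerivAt_pdx hv)).deriv

theorem pdy_mul (hu : DifferentiableAt ℝ u p) (hv : DifferentiableAt ℝ v p) :
    pdy (fun q => u q * v q) p = pdy u p * v p + u p * pdy v p :=
  ((hasDerivAt_pdy hu).mul (hasDerivAt_pdy hv)).deriv

theorem pdx_conj (f : ℝ × ℝ → ℂ) : pdx (fun q => conj (f q)) = fun p => conj (pdx f p) :=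
  funext fun _ => deriv.star

theorem pdy_conj (f : ℝ × ℝ → ℂ) : pdy (fun q => conj (f q)) = fun p => conj (pdy f p) :=
  funext fun _ => deriv.star

theorem lap_conj (f : ℝ × ℝ → ℂ) : lap (fun q => conj (f q)) = fun p => conj (lap f p) := by
  funext p
  simp only [lap, pdx_conj, pdy_conj, map_add]

variable {m n : WithTop ℕ∞}

theorem contDiff_pdx (hf : ContDiff ℝ n f) (hmn : m + 1 ≤ n) : ContDiff ℝ m (pdx f) := by
  have hd : Differentiable ℝ f := (hf.of_le (le_add_self.trans hmn)).differentiable one_ne_zero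
  rw [show pdx f = fun p => fderiv ℝ f p (1, 0) from funext fun p => pdx_eq_fderiv (hd p)]
  exact (hf.fderiv_right hmn).clm_apply contDiff_const

theorem contDiff_pdy (hf : ContDiff ℝ n f) (hmn : m + 1 ≤ n) : ContDiff ℝ m (pdy f) := by
  have hd : Differentiable ℝ f := (hf.of_le (le_add_self.trans hmn)).differentiable one_ne_zero
  rw [show pdy f = fun p => fderiv ℝ f p (0, 1) from funext fun p => pdy_eq_fderiv (hd p)]
  exact (hf.fderiv_right hmn).clm_apply contDiff_const

theorem contDiff_lap (hf : ContDiff ℝ n f) (hmn : m + 2 ≤ n) : ContDiff ℝ m (lap f) := by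
  rw [← one_add_one_eq_two, ← add_assoc] at hmn
  exact (contDiff_pdx (contDiff_pdx hf hmn) le_rfl).add (contDiff_pdy (contDiff_pdy hf hmn) le_rfl)

end PartialDerivatives

theorem isOpen_disk : IsOpen disk :=
  isOpen_lt (by fun_prop) continuous_const

theorem disk_subset_Icc : disk ⊆ Icc (-1, -1) (1, 1) := by
  rintro ⟨x, y⟩ h
  simp only [disk, mem_ofPred_eq] at h
  refine ⟨⟨?_, ?_⟩, ?_, ?_⟩ <;> dsimp only <;> nlinarith [sq_nonneg x, sq_nonneg y]

theorem Continuous.integrableOn_disk {E : Type*} [NormedAddCommGroup E] {f : ℝ × ℝ → E}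
    (hf : Continuous f) : IntegrableOn f disk :=
  (hf.integrableOn_Icc).mono_set disk_subset_Icc

theorem setOf_sq_add_sq_lt_one (c : ℝ) :
    {t : ℝ | t ^ 2 + c ^ 2 < 1} = Ioo (-√(1 - c ^ 2)) √(1 - c ^ 2) := by
  ext t
  rw [mem_ofPred_eq, mem_Ioo, ← abs_lt, Real.lt_sqrt (abs_nonneg t), sq_abs, lt_sub_iff_add_lt]

theorem setIntegral_disk_prod {E : Type*} [NormedAddCommGroup E] [NormedSpace ℝ E]
    {f : ℝ × ℝ → E} (hf : IntegrableOn f disk) :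
    ∫ p in disk, f p = ∫ x, ∫ y in {y | y ^ 2 + x ^ 2 < 1}, f (x, y) := by
  have hf' := hf.integrable_indicator isOpen_disk.measurableSet
  rw [Measure.volume_eq_prod] at hf'
  rw [← integral_indicator isOpen_disk.measurableSet, Measure.volume_eq_prod, integral_prod _ hf']
  congr 1 with x
  rw [← integral_indicator (by rw [setOf_sq_add_sq_lt_one]; exact measurableSet_Ioo)]
  congr 1 with y
  simp only [indicator_apply, disk, mem_ofPred_eq, add_comm]

theorem setIntegral_disk_prod_symm {E : Type*} [NormedAddCommGroup E] [NormedSpace ℝ E]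
    {f : ℝ × ℝ → E} (hf : IntegrableOn f disk) :
    ∫ p in disk, f p = ∫ y, ∫ x in {x | x ^ 2 + y ^ 2 < 1}, f (x, y) := by
  have hf' := hf.integrable_indicator isOpen_disk.measurableSet
  rw [Measure.volume_eq_prod] at hf'
  rw [← integral_indicator isOpen_disk.measurableSet, Measure.volume_eq_prod,
    integral_prod_symm _ hf']
  congr 1 with y
  rw [← integral_indicator (by rw [setOf_sq_add_sq_lt_one]; exact measurableSet_Ioo)]
  rfl

theorem integral_deriv_disk_slice_eq_zero {h : ℝ → ℂ} (c : ℝ) (hd : Differentiable ℝ h)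
    (hc : Continuous (deriv h)) (hb : ∀ t, t ^ 2 + c ^ 2 = 1 → h t = 0) :
    ∫ t in {t | t ^ 2 + c ^ 2 < 1}, deriv h t = 0 := by
  rw [setOf_sq_add_sq_lt_one]
  set a := √(1 - c ^ 2)
  rcases le_or_gt a 0 with ha | ha
  · simp [Ioo_eq_empty (by linarith : ¬-a < a)]
  have ha2 : a ^ 2 = 1 - c ^ 2 := Real.sq_sqrt (Real.sqrt_pos.1 ha).le
  rw [← integral_Ioc_eq_integral_Ioo, ← intervalIntegral.integral_of_le (by linarith),
    intervalIntegral.integral_deriv_eq_sub (fun t _ => hd t) (hc.intervalIntegrable _ _),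
    hb a (by linarith), hb (-a) (by rw [neg_sq]; linarith), sub_zero]

theorem integral_pdx_eq_zero {f : ℝ × ℝ → ℂ} (hf : ContDiff ℝ 1 f)
    (hb : ∀ p ∈ bdry, f p = 0) :
    ∫ p in disk, pdx f p = 0 := by
  have hc : Continuous (pdx f) := (contDiff_pdx (m := 0) hf (zero_add _).le).continuous
  rw [setIntegral_disk_prod_symm hc.integrableOn_disk]
  refine integral_eq_zero_of_ae (ae_of_all _ fun y => ?_)
  exact integral_deriv_disk_slice_eq_zero (h := fun x => f (x, y)) y
    ((hf.differentiable one_ne_zero).comp (by fun_prop))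
    (hc.comp (by fun_prop : Continuous fun x : ℝ => (x, y))) fun x hx => hb (x, y) hx

theorem integral_pdy_eq_zero {f : ℝ × ℝ → ℂ} (hf : ContDiff ℝ 1 f)
    (hb : ∀ p ∈ bdry, f p = 0) :
    ∫ p in disk, pdy f p = 0 := by
  have hc : Continuous (pdy f) := (contDiff_pdy (m := 0) hf (zero_add _).le).continuous
  rw [setIntegral_disk_prod hc.integrableOn_disk]
  refine integral_eq_zero_of_ae (ae_of_all _ fun x => ?_)
  exact integral_deriv_disk_slice_eq_zero (h := fun y => f (x, y)) x
    ((hf.differentiable one_ne_zero).comp (by fun_prop))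
    (hc.comp (by fun_prop : Continuous fun y : ℝ => (x, y)))
    fun y hy => hb (x, y) (by rw [bdry, mem_ofPred_eq, add_comm]; exact hy)

theorem integral_pdx_add_pdy_eq_zero {f g : ℝ × ℝ → ℂ} (hf : ContDiff ℝ 1 f)
    (hg : ContDiff ℝ 1 g) (hfb : ∀ p ∈ bdry, f p = 0) (hgb : ∀ p ∈ bdry, g p = 0) :
    ∫ p in disk, (pdx f p + pdy g p) = 0 := by
  rw [integral_add (contDiff_pdx (m := 0) hf (zero_add _).le).continuous.integrableOn_disk
    (contDiff_pdy (m := 0) hg (zero_add _).le).continuous.integrableOn_disk,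
    integral_pdx_eq_zero hf hfb, integral_pdy_eq_zero hg hgb, add_zero]

theorem ContDiff.conj {E : Type*} [NormedAddCommGroup E] [NormedSpace ℝ E] {f : E → ℂ}
    {n : WithTop ℕ∞} (hf : ContDiff ℝ n f) : ContDiff ℝ n fun x => conj (f x) :=
  conjCLE.contDiff.comp hf

theorem integral_lap_mul_eq_neg_integral_grad_mul {u v : ℝ × ℝ → ℂ} (hu : ContDiff ℝ 2 u)
    (hv : ContDiff ℝ 1 v) (hbx : ∀ p ∈ bdry, pdx u p * v p = 0)
    (hby : ∀ p ∈ bdry, pdy u p * v p = 0) :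
    ∫ p in disk, lap u p * v p = -∫ p in disk, (pdx u p * pdx v p + pdy u p * pdy v p) := by
  have hux : ContDiff ℝ 1 (pdx u) := contDiff_pdx hu one_add_one_eq_two.le
  have huy : ContDiff ℝ 1 (pdy u) := contDiff_pdy hu one_add_one_eq_two.le
  have hvd : Differentiable ℝ v := hv.differentiable one_ne_zero
  have hdiv : ∀ p, pdx (fun q => pdx u q * v q) p + pdy (fun q => pdy u q * v q) p =
      lap u p * v p + (pdx u p * pdx v p + pdy u p * pdy v p) := fun p => by
    rw [pdx_mul ((hux.differentiable one_ne_zero) p) (hvd p),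
      pdy_mul ((huy.differentiable one_ne_zero) p) (hvd p), lap]
    ring
  have hlap : IntegrableOn (fun p => lap u p * v p) disk :=
    ((contDiff_lap (m := 0) hu (zero_add _).le).continuous.mul hv.continuous).integrableOn_disk
  have hgrad : IntegrableOn (fun p => pdx u p * pdx v p + pdy u p * pdy v p) disk :=
    ((hux.continuous.mul (contDiff_pdx (m := 0) hv (zero_add _).le).continuous).add
      (huy.continuous.mul (contDiff_pdy (m := 0) hv (zero_add _).le).continuous)).integrableOn_disk
  have h := integral_pdx_add_pdy_eq_zero (hux.mul hv) (huy.mul hv) hbx hby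
  simp only [hdiv] at h
  rw [integral_add hlap hgrad] at h
  linear_combination h

theorem integral_lap_mul_conj {ψ : ℝ × ℝ → ℂ} (hψ : ContDiff ℝ 2 ψ)
    (hb : ∀ p ∈ bdry, ψ p = 0) :
    ∫ p in disk, lap ψ p * conj (ψ p) =
      -((∫ p in disk, (normSq (pdx ψ p) + normSq (pdy ψ p)) : ℝ) : ℂ) := by
  rw [integral_lap_mul_eq_neg_integral_grad_mul hψ (hψ.conj.of_le one_le_two)
    (fun p hp => by simp [hb p hp]) (fun p hp => by simp [hb p hp]), ← integral_complex_ofReal]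
  simp only [pdx_conj, pdy_conj, mul_conj, ofReal_add]

theorem integral_lap_lap_mul_conj {ψ : ℝ × ℝ → ℂ} (hψ : ContDiff ℝ 4 ψ)
    (hb : ∀ p ∈ bdry, ψ p = 0 ∧ pdx ψ p = 0 ∧ pdy ψ p = 0) :
    ∫ p in disk, lap (lap ψ) p * conj (ψ p) = ((∫ p in disk, normSq (lap ψ p) : ℝ) : ℂ) := by
  have hL : ContDiff ℝ 2 (lap ψ) := contDiff_lap hψ (by norm_num)
  have hψ' : ContDiff ℝ 2 fun p => conj (ψ p) := hψ.conj.of_le (by norm_num)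
  -- Green's identity a second time, with the roles of `lap ψ` and `conj ψ` exchanged.
  have hswap := integral_lap_mul_eq_neg_integral_grad_mul hψ' (hL.of_le one_le_two)
    (fun p hp => by simp [pdx_conj, (hb p hp).2.1]) (fun p hp => by simp [pdy_conj, (hb p hp).2.2])
  rw [lap_conj, pdx_conj, pdy_conj] at hswap
  rw [integral_lap_mul_eq_neg_integral_grad_mul hL (hψ'.of_le one_le_two)
    (fun p hp => by simp [(hb p hp).1]) (fun p hp => by simp [(hb p hp).1]), pdx_conj, pdy_conj]
  simp only [mul_comm (pdx (lap ψ) _), mul_comm (pdy (lap ψ) _)]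
  rw [← hswap, ← integral_complex_ofReal]
  simp only [normSq_eq_conj_mul_self]

theorem eqOn_zero_of_setIntegral_eq_zero {X : Type*} [TopologicalSpace X] [MeasurableSpace X]
    [OpensMeasurableSpace X] {μ : Measure X} [μ.IsOpenPosMeasure] {U : Set X} {h : X → ℝ}
    (hU : IsOpen U) (hc : ContinuousOn h U) (hnn : ∀ x ∈ U, 0 ≤ h x)
    (hint : IntegrableOn h U μ) (hI : ∫ x in U, h x ∂μ = 0) : EqOn h 0 U :=
  Measure.eqOn_open_of_ae_eq ((setIntegral_eq_zero_iff_of_nonneg_ae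
    (ae_restrict_of_forall_mem hU.measurableSet hnn) hint).1 hI) hU hc continuousOn_const

theorem convex_disk : Convex ℝ disk := by
  have h₁ : ConvexOn ℝ univ fun p : ℝ × ℝ => p.1 ^ 2 := by
    simpa [Function.comp_def] using even_two.convexOn_pow.comp_linearMap (LinearMap.fst ℝ ℝ ℝ)
  have h₂ : ConvexOn ℝ univ fun p : ℝ × ℝ => p.2 ^ 2 := by
    simpa [Function.comp_def] using even_two.convexOn_pow.comp_linearMap (LinearMap.snd ℝ ℝ ℝ)
  simpa [disk] using (h₁.add h₂).convex_lt 1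

theorem bdry_subset_closure_disk : bdry ⊆ closure disk := by
  intro p hp
  refine mem_closure_of_tendsto (f := fun t : ℝ => t • p) (b := 𝓝[<] 1)
    (((continuous_id.smul continuous_const).tendsto' 1 p (one_smul ℝ p)).mono_left
      nhdsWithin_le_nhds) ?_
  filter_upwards [Ioo_mem_nhdsLT (zero_lt_one' ℝ)] with t ht
  have hp' : p.1 ^ 2 + p.2 ^ 2 = 1 := hp
  change (t * p.1) ^ 2 + (t * p.2) ^ 2 < 1
  rw [mul_pow, mul_pow, ← mul_add, hp', mul_one]
  exact pow_lt_one₀ ht.1.le ht.2 two_ne_zero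

theorem eqOn_zero_of_pdx_pdy_eqOn_zero {ψ : ℝ × ℝ → ℂ} (hψ : Differentiable ℝ ψ)
    (hx : EqOn (pdx ψ) 0 disk) (hy : EqOn (pdy ψ) 0 disk) (hb : ∀ p ∈ bdry, ψ p = 0) :
    EqOn ψ 0 disk := by
  have hfderiv : EqOn (fderiv ℝ ψ) 0 disk := fun p hp => by
    have h₁ : fderiv ℝ ψ p (1, 0) = 0 := (pdx_eq_fderiv (hψ p)).symm.trans (hx hp)
    have h₂ : fderiv ℝ ψ p (0, 1) = 0 := (pdy_eq_fderiv (hψ p)).symm.trans (hy hp)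
    exact ContinuousLinearMap.prod_ext (ContinuousLinearMap.ext_ring (by simpa using h₁))
      (ContinuousLinearMap.ext_ring (by simpa using h₂))
  have hconst : EqOn ψ (fun _ => ψ 0) disk := fun p hp =>
    isOpen_disk.is_const_of_fderiv_eq_zero convex_disk.isPreconnected hψ.differentiableOn
      hfderiv hp (by simp [disk])
  have h₁₀ : ((1 : ℝ), (0 : ℝ)) ∈ bdry := by simp [bdry]
  have hψ0 : ψ 0 = 0 :=
    (hconst.closure hψ.continuous continuous_const (bdry_subset_closure_disk h₁₀)).symm.trans
      (hb _ h₁₀)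
  exact fun p hp => (hconst hp).trans hψ0

theorem integral_normSq_grad_pos {ψ : ℝ × ℝ → ℂ} (hψ : ContDiff ℝ 1 ψ)
    (hb : ∀ p ∈ bdry, ψ p = 0) (hnz : ¬ ∀ p ∈ disk, ψ p = 0) :
    0 < ∫ p in disk, (normSq (pdx ψ p) + normSq (pdy ψ p)) := by
  refine (setIntegral_nonneg isOpen_disk.measurableSet fun p _ =>
    add_nonneg (normSq_nonneg _) (normSq_nonneg _)).lt_of_ne fun h => hnz fun p hp => ?_
  have hc : Continuous fun p => normSq (pdx ψ p) + normSq (pdy ψ p) :=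
    (continuous_normSq.comp (contDiff_pdx (m := 0) hψ (zero_add _).le).continuous).add
      (continuous_normSq.comp (contDiff_pdy (m := 0) hψ (zero_add _).le).continuous)
  have hgrad := eqOn_zero_of_setIntegral_eq_zero isOpen_disk hc.continuousOn
    (fun p _ => add_nonneg (normSq_nonneg _) (normSq_nonneg _)) hc.integrableOn_disk h.symm
  have hxy : ∀ q ∈ disk, pdx ψ q = 0 ∧ pdy ψ q = 0 := fun q hq => by
    simpa [add_eq_zero_iff_of_nonneg (normSq_nonneg _) (normSq_nonneg _)] using hgrad hq
  exact eqOn_zero_of_pdx_pdy_eqOn_zero (hψ.differentiable one_ne_zero) (fun q hq => (hxy q hq).1)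
    (fun q hq => (hxy q hq).2) hb hp

theorem integral_normSq_lap_pos {ψ : ℝ × ℝ → ℂ} (hψ : ContDiff ℝ 2 ψ)
    (hb : ∀ p ∈ bdry, ψ p = 0) (hnz : ¬ ∀ p ∈ disk, ψ p = 0) :
    0 < ∫ p in disk, normSq (lap ψ p) := by
  refine (setIntegral_nonneg isOpen_disk.measurableSet fun p _ => normSq_nonneg _).lt_of_ne
    fun h => ?_
  have hlap : ∀ᵐ p ∂volume.restrict disk, normSq (lap ψ p) = 0 :=
    (setIntegral_eq_zero_iff_of_nonneg_ae (ae_of_all _ fun p => normSq_nonneg _)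
      (continuous_normSq.comp (contDiff_lap (m := 0) hψ (zero_add _).le).continuous
        ).integrableOn_disk).1 h.symm
  have hzero : ∫ p in disk, lap ψ p * conj (ψ p) = 0 :=
    integral_eq_zero_of_ae (hlap.mono fun p hp => by simp [normSq_eq_zero.1 hp])
  rw [integral_lap_mul_conj hψ hb, neg_eq_zero, ofReal_eq_zero] at hzero
  exact (integral_normSq_grad_pos (hψ.of_le one_le_two) hb hnz).ne' hzero

/-- Newtonian case (ε = 0): every eigenvalue of the stream-function problem
`(1/R)Δ²ψ = βΔψ` with clamped boundary conditions is real and negative. -/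
theorem newtonian_eigenvalues_negative (R : ℝ) (hR : 0 < R) (β : ℂ)
    (ψ : ℝ × ℝ → ℂ) (hψ : ContDiff ℝ (⊤ : ℕ∞) ψ)
    (hnz : ¬ ∀ p ∈ disk, ψ p = 0)
    (hbc : ∀ p ∈ bdry, ψ p = 0 ∧ pdx ψ p = 0 ∧ pdy ψ p = 0)
    (heq : ∀ p ∈ disk, (1 / (R : ℂ)) * lap (lap ψ) p = β * lap ψ p) :
    β.im = 0 ∧ β.re < 0 := by
  have hψ4 : ContDiff ℝ 4 ψ := hψ.of_le (WithTop.coe_le_coe.2 le_top)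
  have hψ0 : ∀ p ∈ bdry, ψ p = 0 := fun p hp => (hbc p hp).1
  set A := ∫ p in disk, normSq (lap ψ p)
  set B := ∫ p in disk, (normSq (pdx ψ p) + normSq (pdy ψ p))
  have hA : 0 < A := integral_normSq_lap_pos (hψ4.of_le (by norm_num)) hψ0 hnz
  have hB : 0 < B := integral_normSq_grad_pos (hψ4.of_le (by norm_num)) hψ0 hnz
  have hAB : 1 / (R : ℂ) * A = β * -B := by
    rw [← integral_lap_lap_mul_conj hψ4 hbc, ← integral_lap_mul_conj (hψ4.of_le (by norm_num)) hψ0,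
      ← integral_const_mul, ← integral_const_mul]
    refine setIntegral_congr_fun isOpen_disk.measurableSet fun p hp => ?_
    simp only [← mul_assoc, heq p hp]
  have hβ : β = ((-(A / (R * B)) : ℝ) : ℂ) := by
    have hR' : (R : ℂ) ≠ 0 := ofReal_ne_zero.2 hR.ne'
    have hB' : (B : ℂ) ≠ 0 := ofReal_ne_zero.2 hB.ne'
    push_cast
    field_simp at hAB ⊢
    linear_combination hAB
  rw [hβ, ofReal_im, ofReal_re]
  exact ⟨rfl, neg_neg_of_pos (by positivity)⟩
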